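/- Let H = (V_H, E_H) be a finite weighted graph with weights θ : E_H → ℝ, and let λ be a dual feasible cycle packing for H (i.e. λ_C ≥ 0 for every conflicted cycle C of H and Σ_{C : e ∈ C} λ_C ≤ |θ_e| for every edge e) whose total value satisfies Σ_C λ_C = Σ_{e ∈ E_H⁻} |θ_e|. Then the reduced costs satisfy θ̃_e ≥ 0 for all e ∈ E_H, and for every cut δ(U) of H it holds that 0 ≤ Σ_{e ∈ δ(U)} θ̃_e ≤ Σ_{e ∈ δ(U)} θ_e. -/
import Mathlib


variable {V : Type} [Fintype V] [DecidableEq V]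

/-- The set of edges of `H` with one endpoint in `U` and the other in `W` (δ(U, W)). -/
def btw (H : SimpleGraph V) [DecidableRel H.Adj] (U W : Finset V) : Finset (Sym2 V) :=
  H.edgeFinset.filter fun e => ∃ x ∈ U, ∃ y ∈ W, e = s(x, y)

/-- The cut δ(U) := δ(U, V \ U). -/
def cutδ (H : SimpleGraph V) [DecidableRel H.Adj] (U : Finset V) : Finset (Sym2 V) :=
  btw H U Uᶜ

/-- `C` is the edge set of a cycle of `H`. -/
def IsCycleEdgeSet (H : SimpleGraph V) (C : Finset (Sym2 V)) : Prop :=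
  ∃ (a : V) (w : H.Walk a a), w.IsCycle ∧ C = w.edges.toFinset


lemma mem_cutδ {H : SimpleGraph V} [DecidableRel H.Adj] {U : Finset V} {x y : V}
    (h : H.Adj x y) : s(x,y) ∈ cutδ H U ↔ ¬ ((x ∈ U) ↔ (y ∈ U)) := by
  unfold cutδ _root_.btw
  simp only [Finset.mem_filter, SimpleGraph.mem_edgeFinset, SimpleGraph.mem_edgeSet]
  constructor
  · rintro ⟨-, a, ha, b, hb, hab⟩
    simp only [Finset.mem_compl] at hb
    rw [Sym2.eq_iff] at hab
    rcases hab with ⟨rfl, rfl⟩ | ⟨rfl, rfl⟩ <;> tauto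
  · intro hxy
    refine ⟨h, ?_⟩
    by_cases hx : x ∈ U
    · exact ⟨x, hx, y, by simp; tauto, rfl⟩
    · exact ⟨y, by tauto, x, by simp [hx], Sym2.eq_swap⟩

lemma walk_parity {H : SimpleGraph V} [DecidableRel H.Adj] (U : Finset V) :
    ∀ {a b : V} (w : H.Walk a b),
    ((w.edges.countP (fun e => decide (e ∈ cutδ H U))) : ZMod 2)
      = (if a ∈ U then 1 else 0) + (if b ∈ U then 1 else 0) := by
  intro a b w
  induction w with
  | nil =>
    simp only [SimpleGraph.Walk.edges_nil, List.countP_nil, Nat.cast_zero]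
    rename_i v
    by_cases h : v ∈ U <;> simp [h] <;> decide
  | @cons a c b h p ih =>
    rw [SimpleGraph.Walk.edges_cons, List.countP_cons, Nat.cast_add, ih]
    have hkey : ((if decide (s(a,c) ∈ cutδ H U) = true then 1 else 0 : ℕ) : ZMod 2)
        = (if a ∈ U then 1 else 0) + (if c ∈ U then 1 else 0) := by
      by_cases ha : a ∈ U <;> by_cases hc : c ∈ U <;>
        simp [mem_cutδ h, ha, hc] <;> decide
    rw [hkey]
    have h2 : ((if c ∈ U then 1 else 0 : ZMod 2) + (if c ∈ U then 1 else 0)) = 0 := by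
      by_cases hc : c ∈ U <;> simp [hc] <;> decide
    linear_combination h2

lemma cycle_cut_even {H : SimpleGraph V} [DecidableRel H.Adj] (U : Finset V)
    {a : V} (w : H.Walk a a) (hw : w.IsCycle) :
    Even ((w.edges.toFinset.filter (fun e => e ∈ cutδ H U)).card) := by
  have hnd := hw.edges_nodup
  have h1 : w.edges.toFinset.filter (fun e => e ∈ cutδ H U)
      = (w.edges.filter (fun e => decide (e ∈ cutδ H U))).toFinset := by
    rw [List.toFinset_filter]; simp
  rw [h1, List.toFinset_card_of_nodup (hnd.filter _)]
  have h2 : ((w.edges.countP (fun e => decide (e ∈ cutδ H U))) : ZMod 2) = 0 := by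
    rw [walk_parity U w]
    by_cases h : a ∈ U <;> simp [h] <;> decide
  rw [ZMod.natCast_eq_zero_iff] at h2
  rw [← List.countP_eq_length_filter]
  rcases h2 with ⟨k, hk⟩; exact ⟨k, by omega⟩


lemma swap_sum {ι : Type} [Fintype ι] (A : Finset (Sym2 V)) (cyc : ι → Finset (Sym2 V))
    (f : Sym2 V → ℝ) (lam : ι → ℝ) :
    ∑ e ∈ A, f e * ∑ i ∈ Finset.univ.filter (fun i => e ∈ cyc i), lam i
      = ∑ i, lam i * ∑ e ∈ A.filter (fun e => e ∈ cyc i), f e := by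
  calc ∑ e ∈ A, f e * ∑ i ∈ Finset.univ.filter (fun i => e ∈ cyc i), lam i
      = ∑ e ∈ A, ∑ i, if e ∈ cyc i then f e * lam i else 0 := by
        refine Finset.sum_congr rfl fun e _ => ?_
        rw [Finset.mul_sum, Finset.sum_filter]
    _ = ∑ i, ∑ e ∈ A, if e ∈ cyc i then f e * lam i else 0 := Finset.sum_comm
    _ = ∑ i, lam i * ∑ e ∈ A.filter (fun e => e ∈ cyc i), f e := by
        refine Finset.sum_congr rfl fun i _ => ?_
        rw [← Finset.sum_filter, Finset.mul_sum]
        exact Finset.sum_congr rfl fun e _ => mul_comm _ _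

/-- nonnegativity of reduced costs and the cut lower-bound property
for a dual feasible conflicted-cycle packing of full value `Σ_{e ∈ E⁻} |θ_e|`. -/
theorem stmt_13 (H : SimpleGraph V) [DecidableRel H.Adj] (θ : Sym2 V → ℝ)
    (ι : Type) [Fintype ι] (cyc : ι → Finset (Sym2 V))
    (hcyc : ∀ i, IsCycleEdgeSet H (cyc i))
    (hconf : ∀ i, ((cyc i).filter (fun e => θ e < 0)).card = 1)
    (lam : ι → ℝ) (hlam : ∀ i, 0 ≤ lam i)
    (hfeas : ∀ e ∈ H.edgeFinset,
      ∑ i ∈ Finset.univ.filter (fun i => e ∈ cyc i), lam i ≤ |θ e|)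
    (htotal : ∑ i, lam i = ∑ e ∈ H.edgeFinset.filter (fun e => θ e < 0), |θ e|)
    (tθ : Sym2 V → ℝ)
    (htθ : ∀ e, tθ e =
      (|θ e| - ∑ i ∈ Finset.univ.filter (fun i => e ∈ cyc i), lam i) * Real.sign (θ e)) :
    (∀ e ∈ H.edgeFinset, 0 ≤ tθ e) ∧
    (∀ U : Finset V,
      (0 ≤ ∑ e ∈ cutδ H U, tθ e) ∧ (∑ e ∈ cutδ H U, tθ e ≤ ∑ e ∈ cutδ H U, θ e)) := by

  classical
  set S : Sym2 V → ℝ := fun e => ∑ i ∈ Finset.univ.filter (fun i => e ∈ cyc i), lam i with hS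
  have htθ' : ∀ e, tθ e = (|θ e| - S e) * Real.sign (θ e) := htθ
  have hfeas' : ∀ e ∈ H.edgeFinset, S e ≤ |θ e| := hfeas
  have hSnn : ∀ e, 0 ≤ S e := fun e => Finset.sum_nonneg fun i _ => hlam i
  have hsub : ∀ i, cyc i ⊆ H.edgeFinset := by
    intro i e he
    obtain ⟨a, w, hw, hC⟩ := hcyc i
    rw [hC, List.mem_toFinset] at he
    exact SimpleGraph.mem_edgeFinset.2 (w.edges_subset_edgeSet he)
  set negE := H.edgeFinset.filter (fun e => θ e < 0) with hnegE
  -- double counting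
  have hdc : ∑ e ∈ negE, S e = ∑ i, lam i := by
    have h1 : ∑ e ∈ negE, (1 : ℝ) * S e = ∑ i, lam i * ∑ e ∈ negE.filter (fun e => e ∈ cyc i), (1:ℝ) := swap_sum negE cyc (fun _ => 1) lam
    simp only [one_mul] at h1
    rw [h1]
    refine Finset.sum_congr rfl fun i _ => ?_
    have hfi : negE.filter (fun e => e ∈ cyc i) = (cyc i).filter (fun e => θ e < 0) := by
      ext e
      simp only [hnegE, Finset.mem_filter]
      constructor
      · rintro ⟨⟨he, hneg⟩, hc⟩; exact ⟨hc, hneg⟩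
      · rintro ⟨hc, hneg⟩; exact ⟨⟨hsub i hc, hneg⟩, hc⟩
    rw [Finset.sum_const, hfi, hconf i]
    simp
  have htight : ∀ e ∈ negE, S e = |θ e| := by
    have hle : ∀ e ∈ negE, S e ≤ |θ e| := fun e he =>
      hfeas e (Finset.mem_of_mem_filter e he)
    exact fun e he => (Finset.sum_eq_sum_iff_of_le hle).1 (hdc.trans htotal) e he
  -- pointwise facts
  have hpoint : ∀ e ∈ H.edgeFinset, 0 ≤ tθ e ∧
      θ e - tθ e = (if θ e < 0 then -1 else 1) * S e := by
    intro e he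
    rw [htθ' e]
    rcases lt_trichotomy (θ e) 0 with hneg | hzero | hpos
    · have ht := htight e (Finset.mem_filter.2 ⟨he, hneg⟩)
      rw [if_pos hneg, ht, Real.sign_of_neg hneg]
      constructor
      · simp
      · rw [abs_of_neg hneg]; ring
    · have hS0 : S e = 0 := le_antisymm (by simpa [hzero] using hfeas' e he) (hSnn e)
      rw [if_neg (by simp [hzero]), hzero, Real.sign_zero, hS0]
      norm_num
    · rw [if_neg (not_lt.2 hpos.le), Real.sign_of_pos hpos, abs_of_pos hpos]
      constructor
      · rw [mul_one, sub_nonneg]; simpa [abs_of_pos hpos] using hfeas' e he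
      · ring
  refine ⟨fun e he => (hpoint e he).1, fun U => ?_⟩
  have hcutsub : cutδ H U ⊆ H.edgeFinset := Finset.filter_subset _ _
  have h0 : 0 ≤ ∑ e ∈ cutδ H U, tθ e :=
    Finset.sum_nonneg fun e he => (hpoint e (hcutsub he)).1
  refine ⟨h0, ?_⟩
  rw [← sub_nonneg, ← Finset.sum_sub_distrib]
  have hrw : ∑ e ∈ cutδ H U, (θ e - tθ e)
      = ∑ i, lam i * ∑ e ∈ (cutδ H U).filter (fun e => e ∈ cyc i),
          (if θ e < 0 then (-1:ℝ) else 1) := by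
    rw [← swap_sum (cutδ H U) cyc (fun e => if θ e < 0 then (-1:ℝ) else 1) lam]
    exact Finset.sum_congr rfl fun e he => (hpoint e (hcutsub he)).2
  rw [hrw]
  refine Finset.sum_nonneg fun i _ => mul_nonneg (hlam i) ?_
  set D := (cutδ H U).filter (fun e => e ∈ cyc i) with hD
  set n := (D.filter (fun e => θ e < 0)).card with hn
  set p := (D.filter (fun e => ¬ θ e < 0)).card with hp
  have hsplit : ∑ e ∈ D, (if θ e < 0 then (-1:ℝ) else 1) = (p : ℝ) - (n : ℝ) := by
    rw [← Finset.sum_filter_add_sum_filter_not D (fun e => θ e < 0)]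
    rw [Finset.sum_congr rfl (fun e he => if_pos (Finset.mem_filter.1 he).2),
      Finset.sum_congr rfl (fun e he => if_neg (Finset.mem_filter.1 he).2),
      Finset.sum_const, Finset.sum_const]
    simp [hn, hp]; ring
  rw [hsplit, sub_nonneg, Nat.cast_le]
  -- n ≤ 1
  have hn1 : n ≤ 1 := by
    rw [hn, ← hconf i]
    apply Finset.card_le_card
    intro e he2
    simp only [hD, Finset.mem_filter] at *
    tauto
  -- n + p even
  have hnp : n + p = D.card := Finset.card_filter_add_card_filter_not _
  have heven : Even D.card := by
    obtain ⟨a, w, hw, hC⟩ := hcyc i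
    have hDeq : D = (cyc i).filter (fun e => e ∈ cutδ H U) := by
      ext e; simp only [hD, Finset.mem_filter]; tauto
    rw [hDeq, hC]
    exact cycle_cut_even U w hw
  rcases heven with ⟨k, hk⟩
  omega
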